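/- arXiv:1602.04097 — 5 statements merged into one kernel-verified Lean document; each statement's English description precedes it below -/
import Mathlib

section
/- Let L : ℝ² → ℝ be a nonzero linear form, let κ > 1 be real, and let T ≥ κ / (√2 · (κ-1)^{1/4}). Then there exists a nonzero integer vector u ∈ ℤ² such that ‖u‖ ≤ T (euclidean norm) and |L(u)| ≤ κ‖L‖ / T, where ‖L‖ is the euclidean norm of the coefficient vector of L. -/
/-!
By Minkowski's convex body theorem it suffices to find a symmetric convex compact set of area
at least `4` inside `K = {v | ‖v‖ ≤ T ∧ |L v| ≤ κ ‖L‖ / T}`. In coordinates `(s, t)` along the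
direction of `L` and orthogonal to it, `K` is the disc of radius `T` cut by the strip
`|s| ≤ w := κ / T`. Inside it lies the hexagon with vertices `(0, ±T)` and
`(±w, ±√(T² - w²))`, of area `2 w (T + √(T² - w²))`; since `w T = κ`, this area is at least `4`
exactly when `κ⁴ ≤ 4 (κ - 1) T⁴`, which is the hypothesis on `T`. A rotation of determinant `1`
carries the hexagon into `K`.
-/

open MeasureTheory Set

theorem exists_ne_zero_int_mem_image_of_two_pow_card_le {ι : Type*} [Fintype ι] [Nonempty ι]
    (f : (ι → ℝ) →ₗ[ℝ] ι → ℝ) {S : Set (ι → ℝ)} (h_symm : ∀ x ∈ S, -x ∈ S)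
    (h_conv : Convex ℝ S) (h_cpt : IsCompact S)
    (h_vol : 2 ^ Fintype.card ι ≤ ENNReal.ofReal |LinearMap.det f| * volume S) :
    ∃ u : ι → ℤ, u ≠ 0 ∧ (fun i ↦ (u i : ℝ)) ∈ f '' S := by
  classical
  have h_symm' : ∀ x ∈ f '' S, -x ∈ f '' S := by
    rintro _ ⟨p, hp, rfl⟩
    exact ⟨-p, h_symm p hp, map_neg f p⟩
  have : Countable (Submodule.span ℤ (range (Pi.basisFun ℝ ι))).toAddSubgroup :=
    inferInstanceAs (Countable (Submodule.span ℤ (range (Pi.basisFun ℝ ι))))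
  obtain ⟨x, hx0, hxS⟩ := exists_ne_zero_mem_lattice_of_measure_mul_two_pow_le_measure
    (ZSpan.isAddFundamentalDomain' (Pi.basisFun ℝ ι) volume) h_symm' (h_conv.linear_image f)
    (h_cpt.image f.continuous_of_finiteDimensional) (by
      simpa [Measure.addHaar_image_linearMap, ZSpan.fundamentalDomain_pi_basisFun, volume_pi]
        using h_vol)
  have h_int : ∀ i, ∃ n : ℤ, (n : ℝ) = (x : ι → ℝ) i := fun i ↦ by
    simpa using ((Pi.basisFun ℝ ι).mem_span_iff_repr_mem ℤ x).mp x.2 i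
  choose u hu using h_int
  refine ⟨u, fun h ↦ hx0 ?_, by simpa only [hu] using hxS⟩
  ext i
  simp [← hu, h]

theorem integral_abs_symmetric_interval {w : ℝ} (hw : 0 ≤ w) : ∫ y in -w..w, |y| = w ^ 2 := by
  have h_int : ∀ a b : ℝ, IntervalIntegrable (|·|) volume a b := fun _ _ ↦
    continuous_abs.intervalIntegrable _ _
  have h_half : ∫ y in (0 : ℝ)..w, |y| = w ^ 2 / 2 := by
    rw [intervalIntegral.integral_congr (f := (|·|)) (g := id) fun y hy ↦ abs_of_nonneg (by
      rw [uIcc_of_le hw] at hy; exact hy.1)]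
    simp
  have h_neg : ∫ y in -w..0, |y| = ∫ y in (0 : ℝ)..w, |y| := by
    simpa using (intervalIntegral.integral_comp_neg (a := 0) (b := w) (|·|)).symm
  rw [← intervalIntegral.integral_add_adjacent_intervals (h_int _ 0) (h_int 0 _), h_neg, h_half]
  ring

/-- For `0 ≤ m * w ≤ T`, the hexagon with vertices `(0, ±T)` and `(±w, ±(T - m w))`. -/
def hexagon (T w m : ℝ) : Set (Fin 2 → ℝ) := {p | |p 1| + m * |p 0| ≤ T ∧ |p 0| ≤ w}

namespace hexagon

variable {T w m : ℝ}

theorem neg_mem {p : Fin 2 → ℝ} (hp : p ∈ hexagon T w m) : -p ∈ hexagon T w m := by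
  simpa [hexagon] using hp

theorem convex (hm : 0 ≤ m) : Convex ℝ (hexagon T w m) := by
  have h_abs : ∀ i : Fin 2, ConvexOn ℝ univ fun p : Fin 2 → ℝ ↦ |p i| := fun i ↦
    (convexOn_univ_norm (E := ℝ)).comp_linearMap
      (LinearMap.proj (R := ℝ) (φ := fun _ : Fin 2 ↦ ℝ) i)
  have := ((h_abs 1).add ((h_abs 0).smul hm)).convex_le T |>.inter ((h_abs 0).convex_le w)
  simpa [hexagon, ofPred_and] using this

theorem isCompact (hm : 0 ≤ m) : IsCompact (hexagon T w m) := by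
  refine Metric.isCompact_of_isClosed_isBounded ?_ ?_
  · show IsClosed ({p : Fin 2 → ℝ | |p 1| + m * |p 0| ≤ T} ∩ {p | |p 0| ≤ w})
    exact (isClosed_le (by fun_prop) continuous_const).inter
      (isClosed_le (by fun_prop) continuous_const)
  · refine (Metric.isBounded_iff_subset_closedBall 0).2 ⟨T + w, fun p ⟨h1, h0⟩ ↦ ?_⟩
    have h1' : |p 1| ≤ T := by nlinarith [abs_nonneg (p 0)]
    have h_nonneg := abs_nonneg (p 0)
    rw [mem_closedBall_zero_iff, pi_norm_le_iff_of_nonneg (by linarith [abs_nonneg (p 1)]),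
      Fin.forall_fin_two, Real.norm_eq_abs, Real.norm_eq_abs]
    constructor <;> linarith [abs_nonneg (p 1)]

theorem sq_add_sq_le {p : Fin 2 → ℝ} (hp : p ∈ hexagon T w m)
    (hmw : (m ^ 2 + 1) * w = 2 * T * m) : p 0 ^ 2 + p 1 ^ 2 ≤ T ^ 2 := by
  obtain ⟨h1, h0⟩ := hp
  have h_p1 : p 1 ^ 2 ≤ (T - m * |p 0|) ^ 2 := by
    rw [← sq_abs]
    exact pow_le_pow_left₀ (abs_nonneg _) (by linarith) 2
  -- `t ↦ (T - m t)² + t²` is a convex quadratic equal to `T²` at `t = 0` and at `t = w`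
  have h_quad : (T - m * |p 0|) ^ 2 + |p 0| ^ 2 - T ^ 2 = (m ^ 2 + 1) * |p 0| * (|p 0| - w) := by
    linear_combination |p 0| * hmw
  have : (m ^ 2 + 1) * |p 0| * (|p 0| - w) ≤ 0 :=
    mul_nonpos_of_nonneg_of_nonpos (by positivity) (by linarith)
  linarith [sq_abs (p 0)]

theorem ofReal_le_volume (hw : 0 ≤ w) (hm : 0 ≤ m) (hmw : m * w ≤ T) :
    ENNReal.ofReal (2 * w * (2 * T - m * w)) ≤ volume (hexagon T w m) := by
  set g : ℝ → ℝ := fun y ↦ T - m * |y|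
  have hg : Continuous g := by fun_prop
  have h_region : MeasurableEquiv.finTwoArrow ⁻¹' regionBetween (-g) g (Icc (-w) w) ⊆
      hexagon T w m := by
    rintro p ⟨hp0, hp1⟩
    change p 0 ∈ Icc (-w) w at hp0
    change p 1 ∈ Ioo (-(T - m * |p 0|)) (T - m * |p 0|) at hp1
    exact ⟨by linarith [abs_lt.2 hp1], abs_le.2 hp0⟩
  have h_area : ∫ y in Icc (-w) w, (g - -g) y = 2 * w * (2 * T - m * w) := by
    have h_gap : g - -g = fun y ↦ 2 * T - 2 * m * |y| := by
      funext y; simp only [Pi.sub_apply, Pi.neg_apply, g]; ring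
    rw [h_gap, integral_Icc_eq_integral_Ioc, ← intervalIntegral.integral_of_le (by linarith),
      intervalIntegral.integral_sub intervalIntegrable_const
        ((continuous_abs.const_mul _).intervalIntegrable _ _),
      intervalIntegral.integral_const, intervalIntegral.integral_const_mul,
      integral_abs_symmetric_interval hw, smul_eq_mul]
    ring
  calc ENNReal.ofReal (2 * w * (2 * T - m * w))
      = volume (regionBetween (-g) g (Icc (-w) w)) := by
        rw [Measure.volume_eq_prod, volume_regionBetween_eq_integral hg.neg.integrableOn_Icc
          hg.integrableOn_Icc measurableSet_Icc, h_area]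
        intro y hy
        have : m * |y| ≤ m * w := mul_le_mul_of_nonneg_left (abs_le.2 hy) hm
        simp only [Pi.neg_apply, g]
        linarith
    _ = volume (MeasurableEquiv.finTwoArrow ⁻¹' regionBetween (-g) g (Icc (-w) w)) :=
        ((volume_preserving_finTwoArrow ℝ).measure_preimage_equiv _).symm
    _ ≤ volume (hexagon T w m) := measure_mono h_region

end hexagon

theorem exists_hexagon_subset_disc {T w : ℝ} (hw : 0 < w) (hwT : w ≤ T) :
    ∃ m, 0 ≤ m ∧ (∀ p ∈ hexagon T w m, p 0 ^ 2 + p 1 ^ 2 ≤ T ^ 2) ∧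
      ENNReal.ofReal (2 * w * (T + √(T ^ 2 - w ^ 2))) ≤ volume (hexagon T w m) := by
  set a := √(T ^ 2 - w ^ 2)
  have ha : 0 ≤ a := Real.sqrt_nonneg _
  have ha2 : a ^ 2 = T ^ 2 - w ^ 2 := Real.sq_sqrt (by nlinarith)
  have haT : a ≤ T := by nlinarith
  -- the slope that puts the vertices `(±w, ±a)` on the circle of radius `T`
  set m := (T - a) / w
  have hmw : m * w = T - a := div_mul_cancel₀ _ hw.ne'
  have hm : 0 ≤ m := div_nonneg (by linarith) hw.le
  refine ⟨m, hm, fun p hp ↦ hexagon.sq_add_sq_le hp ?_, ?_⟩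
  · refine mul_right_cancel₀ hw.ne' ?_
    linear_combination (m * w - T - a) * hmw + ha2
  · convert hexagon.ofReal_le_volume (T := T) hw.le hm (by linarith) using 2
    rw [hmw]
    ring

/-- Multiplication by the complex number `e 0 + e 1 * I`; a rotation when
`e 0 ^ 2 + e 1 ^ 2 = 1`. -/
def planeRotation (e : Fin 2 → ℝ) : (Fin 2 → ℝ) →ₗ[ℝ] Fin 2 → ℝ :=
  Matrix.toLin' !![e 0, -e 1; e 1, e 0]

namespace planeRotation

variable (e p : Fin 2 → ℝ)

@[simp]
theorem apply_zero : planeRotation e p 0 = e 0 * p 0 - e 1 * p 1 := by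
  simp [planeRotation, Matrix.mulVec, dotProduct, Fin.sum_univ_two]; ring

@[simp]
theorem apply_one : planeRotation e p 1 = e 1 * p 0 + e 0 * p 1 := by
  simp [planeRotation, Matrix.mulVec, dotProduct, Fin.sum_univ_two]

theorem det : LinearMap.det (planeRotation e) = e 0 ^ 2 + e 1 ^ 2 := by
  rw [planeRotation, LinearMap.det_toLin', Matrix.det_fin_two_of]
  ring

theorem sq_add_sq : planeRotation e p 0 ^ 2 + planeRotation e p 1 ^ 2 =
    (e 0 ^ 2 + e 1 ^ 2) * (p 0 ^ 2 + p 1 ^ 2) := by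
  simp only [apply_zero, apply_one]
  ring

theorem inner_self_left :
    e 0 * planeRotation e p 0 + e 1 * planeRotation e p 1 = (e 0 ^ 2 + e 1 ^ 2) * p 0 := by
  simp only [apply_zero, apply_one]
  ring

end planeRotation

theorem pow_four_le_of_div_le {κ T : ℝ} (hκ : 1 < κ)
    (hT : κ / (√2 * (κ - 1) ^ ((1 : ℝ) / 4)) ≤ T) : κ ^ 4 ≤ 4 * (κ - 1) * T ^ 4 := by
  have h_den : 0 < √2 * (κ - 1) ^ ((1 : ℝ) / 4) := by
    have := sub_pos.2 hκ
    positivity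
  have h_den_pow : (√2 * (κ - 1) ^ ((1 : ℝ) / 4)) ^ 4 = 4 * (κ - 1) := by
    have h_sqrt : √2 ^ 4 = 4 := by
      rw [show 4 = 2 * 2 from rfl, pow_mul, Real.sq_sqrt zero_le_two]
      norm_num
    rw [mul_pow, h_sqrt, ← Real.rpow_natCast ((κ - 1) ^ _), ← Real.rpow_mul (by linarith)]
    norm_num
  calc κ ^ 4 ≤ (T * (√2 * (κ - 1) ^ ((1 : ℝ) / 4))) ^ 4 :=
        pow_le_pow_left₀ (by linarith) ((div_le_iff₀ h_den).1 hT) 4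
    _ = 4 * (κ - 1) * T ^ 4 := by rw [mul_pow, h_den_pow]; ring

theorem le_of_mul_eq_of_pow_four_le {κ T w : ℝ} (hκ : 1 < κ) (hT : 0 < T) (hwT : w * T = κ)
    (h : κ ^ 4 ≤ 4 * (κ - 1) * T ^ 4) : w ≤ T := by
  have : κ ^ 2 ≤ T ^ 4 := by nlinarith [sq_nonneg (κ - 2), pow_pos hT 4]
  have : κ ≤ T ^ 2 := by nlinarith
  nlinarith

theorem two_le_mul_add_sqrt {κ T w : ℝ} (hκ : 1 < κ) (hT : 0 < T) (hwT : w * T = κ)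
    (h : κ ^ 4 ≤ 4 * (κ - 1) * T ^ 4) : 2 ≤ w * (T + √(T ^ 2 - w ^ 2)) := by
  have hw : 0 < w := pos_of_mul_pos_left (hwT ▸ (by linarith : (0 : ℝ) < κ)) hT.le
  set a := √(T ^ 2 - w ^ 2)
  have ha : 0 ≤ a := Real.sqrt_nonneg _
  have ha2 : a ^ 2 = T ^ 2 - w ^ 2 :=
    Real.sq_sqrt (by nlinarith [le_of_mul_eq_of_pow_four_le hκ hT hwT h])
  rcases le_or_gt 2 κ with hκ2 | hκ2
  · nlinarith [mul_nonneg hw.le ha]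
  · have : (2 - κ) ^ 2 ≤ (w * a) ^ 2 := by
      have : T ^ 4 * (w * a) ^ 2 = T ^ 4 * κ ^ 2 - κ ^ 4 := by
        rw [mul_pow, ha2, ← hwT]
        ring
      nlinarith [pow_pos hT 4]
    nlinarith [mul_nonneg hw.le ha]

/-- Geometry of numbers lemma: given a nonzero linear form `L` on `ℝ²` with coefficient
vector `c`, `κ > 1` and `T ≥ κ / (√2 (κ-1)^{1/4})`, there is a nonzero integer vector `u`
with euclidean norm `≤ T` and `|L(u)| ≤ κ‖L‖/T`. -/
theorem stmt_0 (c : Fin 2 → ℝ) (hc : c ≠ 0) (κ T : ℝ) (hκ : 1 < κ)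
    (hT : κ / (Real.sqrt 2 * (κ - 1) ^ ((1 : ℝ) / 4)) ≤ T) :
    ∃ u : Fin 2 → ℤ, u ≠ 0 ∧
      Real.sqrt ((u 0 : ℝ) ^ 2 + (u 1 : ℝ) ^ 2) ≤ T ∧
      |c 0 * (u 0 : ℝ) + c 1 * (u 1 : ℝ)| ≤ κ * Real.sqrt (c 0 ^ 2 + c 1 ^ 2) / T := by
  have hT0 : 0 < T := lt_of_lt_of_le (by have := sub_pos.2 hκ; positivity) hT
  set w := κ / T
  have hwT : w * T = κ := div_mul_cancel₀ κ hT0.ne'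
  have hκT := pow_four_le_of_div_le hκ hT
  obtain ⟨m, hm, h_disc, h_vol⟩ := exists_hexagon_subset_disc (by positivity : 0 < w)
    (le_of_mul_eq_of_pow_four_le hκ hT0 hwT hκT)
  set n := √(c 0 ^ 2 + c 1 ^ 2)
  have hn : 0 < n := by
    rcases (show c 0 ≠ 0 ∨ c 1 ≠ 0 by contrapose! hc; ext i; fin_cases i <;> simp [hc])
      with h | h <;> positivity
  set e := n⁻¹ • c
  have hce : ∀ i, c i = n * e i := fun i ↦ by simp [e, hn.ne']
  have he : e 0 ^ 2 + e 1 ^ 2 = 1 := by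
    simp only [e, Pi.smul_apply, smul_eq_mul]
    field_simp
    exact (Real.sq_sqrt (by positivity)).symm
  have h_four : 2 ^ Fintype.card (Fin 2) ≤
      ENNReal.ofReal |LinearMap.det (planeRotation e)| * volume (hexagon T w m) := by
    rw [planeRotation.det, he, abs_one, ENNReal.ofReal_one, one_mul, Fintype.card_fin,
      show (2 : ENNReal) ^ 2 = ENNReal.ofReal 4 by norm_num]
    exact (ENNReal.ofReal_le_ofReal (by linarith [two_le_mul_add_sqrt hκ hT0 hwT hκT])).trans
      h_vol
  obtain ⟨u, hu0, p, hp, hpu⟩ := exists_ne_zero_int_mem_image_of_two_pow_card_le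
    (planeRotation e) (fun _ ↦ hexagon.neg_mem) (hexagon.convex hm) (hexagon.isCompact hm) h_four
  have hu : ∀ i, (u i : ℝ) = planeRotation e p i := fun i ↦ (congrFun hpu i).symm
  refine ⟨u, hu0, ?_, ?_⟩
  · rw [hu, hu, planeRotation.sq_add_sq, he, one_mul, Real.sqrt_le_left hT0.le]
    exact h_disc p hp
  · have h_form : c 0 * (u 0 : ℝ) + c 1 * (u 1 : ℝ) = n * p 0 := by
      rw [hu, hu, hce, hce]
      linear_combination n * planeRotation.inner_self_left e p + n * p 0 * he
    rw [h_form, abs_mul, abs_of_pos hn, mul_div_right_comm, mul_comm]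
    exact mul_le_mul_of_nonneg_right hp.2 hn.le
end

section
/- For every positive integer n with n ≥ 2, the absolute value of the n-th cyclotomic polynomial evaluated at 2 satisfies |Φ_n(2)| > 5^{φ(n)/4}, where φ is Euler's totient function. -/
/-!
Möbius inversion of `∏_{d ∣ n} Φ_d(2) = 2 ^ n - 1` gives
`Φ_n(2) = 2 ^ φ(n) * ∏_{de = n} (1 - 2⁻ᵉ) ^ μ(d)`. The factors with `μ(d) ≤ 0` are at least `1`,
and by the Weierstrass product inequality the others multiply to at least
`1 - ∑_{μ(d) = 1} 2⁻ᵉ ≥ 15 / 32`: the term `e = 1` occurs only when `μ(n) = 1`, and then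
every other `e` has `μ(e) = 1`, so `e ≥ 6`. Hence `Φ_n(2) ^ 4 ≥ (15 / 32) ^ 4 * 16 ^ φ(n)`, which
exceeds `5 ^ φ(n)` as soon as `φ(n) ≥ 3`. When `φ(n) ≤ 2` it suffices that `Φ_n(2)` is an odd
integer (it divides `2 ^ n - 1`) larger than `1`.
-/

open Polynomial Finset ArithmeticFunction
open scoped ArithmeticFunction.Moebius

theorem Finset.one_sub_sum_le_prod_one_sub {ι R : Type*} [CommRing R] [LinearOrder R]
    [IsStrictOrderedRing R] {s : Finset ι} {f : ι → R}
    (h0 : ∀ i ∈ s, 0 ≤ f i) (h1 : ∀ i ∈ s, f i ≤ 1) :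
    1 - ∑ i ∈ s, f i ≤ ∏ i ∈ s, (1 - f i) := by
  induction s using Finset.cons_induction with
  | empty => simp
  | cons a s ha ih =>
    simp only [Finset.forall_mem_cons] at h0 h1
    rw [prod_cons, sum_cons]
    have hs : 0 ≤ ∑ i ∈ s, f i := sum_nonneg h0.2
    nlinarith [mul_le_mul_of_nonneg_left (ih h0.2 h1.2) (sub_nonneg.2 h1.1)]

theorem prod_zpow_eq_zpow_sum {ι G₀ : Type*} [CommGroupWithZero G₀] {a : G₀} (ha : a ≠ 0)
    (s : Finset ι) (k : ι → ℤ) : ∏ i ∈ s, a ^ k i = a ^ ∑ i ∈ s, k i := by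
  induction s using Finset.cons_induction with
  | empty => simp
  | cons i s hi ih => rw [prod_cons, sum_cons, ih, zpow_add₀ ha]

theorem sum_inv_two_pow_le {s : Finset ℕ} {a : ℕ} (hs : ∀ e ∈ s, a ≤ e) :
    ∑ e ∈ s, ((2 : ℝ) ^ e)⁻¹ ≤ 2 * ((2 : ℝ) ^ a)⁻¹ := by
  have hsub : s ⊆ Ico a (s.sup id + 1) := fun e he =>
    mem_Ico.2 ⟨hs e he, Nat.lt_succ_of_le (le_sup (f := id) he)⟩
  simp_rw [← inv_pow]
  calc ∑ e ∈ s, (2⁻¹ : ℝ) ^ e ≤ ∑ e ∈ Ico a (s.sup id + 1), (2⁻¹ : ℝ) ^ e :=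
        sum_le_sum_of_subset_of_nonneg hsub fun _ _ _ => by positivity
    _ ≤ (2⁻¹ : ℝ) ^ a / (1 - 2⁻¹) := geom_sum_Ico_le_of_lt_one (by norm_num) (by norm_num)
    _ = 2 * (2⁻¹ : ℝ) ^ a := by ring

theorem sum_moebius_mul_eq_totient {n : ℕ} (hn : 0 < n) :
    ∑ x ∈ n.divisorsAntidiagonal, (μ x.1 : ℤ) * x.2 = n.totient :=
  (sum_eq_iff_sum_mul_moebius_eq (f := fun m => (m.totient : ℤ)) (g := fun m => (m : ℤ))).1
    (fun m _ => mod_cast Nat.sum_totient m) n hn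

theorem eval_cyclotomic_eq_prod_pow_moebius {q : ℝ} (hq : 1 < q) {n : ℕ} (hn : 0 < n) :
    (cyclotomic n ℝ).eval q = ∏ x ∈ n.divisorsAntidiagonal, (q ^ x.2 - 1) ^ μ x.1 := by
  refine ((prod_eq_iff_prod_pow_moebius_eq_of_nonzero (fun m _ => (cyclotomic_pos' m hq).ne')
    (fun m hm => sub_ne_zero.2 (one_lt_pow₀ hq hm.ne').ne')).1 (fun m hm => ?_) n hn).symm
  simpa [eval_prod] using congrArg (eval q) (prod_cyclotomic_eq_X_pow_sub_one hm ℝ)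

theorem eval_cyclotomic_eq_pow_totient_mul_prod {q : ℝ} (hq : 1 < q) {n : ℕ} (hn : 0 < n) :
    (cyclotomic n ℝ).eval q =
      q ^ n.totient * ∏ x ∈ n.divisorsAntidiagonal, (1 - (q ^ x.2)⁻¹) ^ μ x.1 := by
  have hq0 : q ≠ 0 := by positivity
  have hsplit : ∀ x ∈ n.divisorsAntidiagonal, (q ^ x.2 - 1) ^ μ x.1 =
      q ^ ((μ x.1 : ℤ) * x.2) * (1 - (q ^ x.2)⁻¹) ^ μ x.1 := fun x _ => by
    rw [mul_comm (μ x.1 : ℤ), zpow_mul, zpow_natCast, ← mul_zpow, mul_sub, mul_one,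
      mul_inv_cancel₀ (pow_ne_zero _ hq0)]
  rw [eval_cyclotomic_eq_prod_pow_moebius hq hn, prod_congr rfl hsplit, prod_mul_distrib,
    prod_zpow_eq_zpow_sum hq0, sum_moebius_mul_eq_totient hn, zpow_natCast]

theorem prod_filter_one_sub_le_prod_one_sub_zpow {ι : Type*} {s : Finset ι} {t : ι → ℝ}
    {k : ι → ℤ} (ht0 : ∀ i ∈ s, 0 ≤ t i) (ht1 : ∀ i ∈ s, t i < 1) (hk : ∀ i ∈ s, k i ≤ 1) :
    ∏ i ∈ s with k i = 1, (1 - t i) ≤ ∏ i ∈ s, (1 - t i) ^ k i := by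
  rw [← prod_filter_mul_prod_filter_not s (fun i => k i = 1)]
  have hfilter : ∏ i ∈ s with k i = 1, (1 - t i) ^ k i = ∏ i ∈ s with k i = 1, (1 - t i) :=
    prod_congr rfl fun i hi => by rw [(mem_filter.1 hi).2, zpow_one]
  rw [hfilter]
  refine le_mul_of_one_le_right (prod_nonneg fun i hi => ?_) (one_le_prod fun i hi => ?_)
  · linarith [ht1 i (mem_filter.1 hi).1]
  · obtain ⟨hi, hki⟩ := mem_filter.1 hi
    exact one_le_zpow_of_nonpos₀ (by linarith [ht1 i hi]) (by linarith [ht0 i hi])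
      (by have := hk i hi; omega)

theorem six_le_of_moebius_eq_one {e : ℕ} (he : μ e = 1) (he1 : e ≠ 1) : 6 ≤ e := by
  by_contra! h
  interval_cases e <;>
    simp_all [moebius_apply_prime, Nat.prime_two, Nat.prime_three, Nat.prime_five,
      moebius_eq_zero_of_not_squarefree (show ¬Squarefree 4 by decide)]

theorem moebius_eq_one_of_moebius_div_eq_one {n e : ℕ} (hn : μ n = 1) (he : e ∣ n)
    (hne : μ (n / e) = 1) : μ e = 1 := by
  obtain ⟨m, rfl⟩ := he
  have hsq : Squarefree (e * m) := moebius_ne_zero_iff_squarefree.1 (by rw [hn]; norm_num)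
  rw [Nat.mul_div_cancel_left m (Nat.pos_of_ne_zero (left_ne_zero_of_mul hsq.ne_zero))] at hne
  rwa [isMultiplicative_moebius.map_mul_of_coprime (Nat.coprime_of_squarefree_mul hsq), hne,
    mul_one] at hn

theorem sum_filter_moebius_eq_one_inv_two_pow_le (n : ℕ) :
    ∑ x ∈ n.divisorsAntidiagonal with μ x.1 = 1, ((2 : ℝ) ^ x.2)⁻¹ ≤ 17 / 32 := by
  rw [sum_filter, Nat.sum_divisorsAntidiagonal' fun d e => if μ d = 1 then ((2 : ℝ) ^ e)⁻¹ else 0,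
    ← sum_filter, ← sum_filter_add_sum_filter_not _ (· = 1)]
  set T := {e ∈ n.divisors | μ (n / e) = 1}
  have hT : ∀ e ∈ T, e ∣ n ∧ 1 ≤ e ∧ μ (n / e) = 1 := fun e he => by
    obtain ⟨he, hμ⟩ := mem_filter.1 he
    exact ⟨Nat.dvd_of_mem_divisors he, Nat.pos_of_mem_divisors he, hμ⟩
  by_cases hμ : μ n = 1
  · have hone : ∑ e ∈ T with e = 1, ((2 : ℝ) ^ e)⁻¹ ≤ ∑ e ∈ {1}, ((2 : ℝ) ^ e)⁻¹ :=
      sum_le_sum_of_subset_of_nonneg (fun e he => by simp [(mem_filter.1 he).2])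
        fun _ _ _ => by positivity
    have hrest := sum_inv_two_pow_le (s := {e ∈ T | e ≠ 1}) (a := 6) fun e he => by
      obtain ⟨he, he1⟩ := mem_filter.1 he
      obtain ⟨hdvd, -, hdiv⟩ := hT e he
      exact six_le_of_moebius_eq_one (moebius_eq_one_of_moebius_div_eq_one hμ hdvd hdiv) he1
    norm_num at hone hrest ⊢
    linarith
  · have hone : {e ∈ T | e = 1} = ∅ := filter_eq_empty_iff.2 fun e he he1 =>
      hμ (by simpa [he1] using (hT e he).2.2)
    have hrest := sum_inv_two_pow_le (s := {e ∈ T | e ≠ 1}) (a := 2) fun e he => by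
      obtain ⟨he, he1⟩ := mem_filter.1 he
      have := (hT e he).2.1
      omega
    rw [hone, sum_empty]
    norm_num at hrest ⊢
    linarith

theorem mul_two_pow_totient_le_eval_two_cyclotomic {n : ℕ} (hn : 0 < n) :
    15 / 32 * 2 ^ n.totient ≤ (cyclotomic n ℝ).eval 2 := by
  have hu : ∀ x ∈ n.divisorsAntidiagonal, 0 ≤ ((2 : ℝ) ^ x.2)⁻¹ ∧ ((2 : ℝ) ^ x.2)⁻¹ < 1 :=
    fun x hx => ⟨by positivity, inv_lt_one_of_one_lt₀ (one_lt_pow₀ one_lt_two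
      (Nat.pos_of_mem_divisors (Nat.snd_mem_divisors_of_mem_antidiagonal hx)).ne')⟩
  rw [eval_cyclotomic_eq_pow_totient_mul_prod one_lt_two hn, mul_comm]
  gcongr
  calc (15 / 32 : ℝ) ≤ 1 - ∑ x ∈ n.divisorsAntidiagonal with μ x.1 = 1, ((2 : ℝ) ^ x.2)⁻¹ := by
        linarith [sum_filter_moebius_eq_one_inv_two_pow_le n]
    _ ≤ ∏ x ∈ n.divisorsAntidiagonal with μ x.1 = 1, (1 - ((2 : ℝ) ^ x.2)⁻¹) :=
        one_sub_sum_le_prod_one_sub (fun x hx => (hu x (mem_filter.1 hx).1).1)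
          fun x hx => (hu x (mem_filter.1 hx).1).2.le
    _ ≤ _ := prod_filter_one_sub_le_prod_one_sub_zpow (fun x hx => (hu x hx).1)
          (fun x hx => (hu x hx).2) fun x _ => (abs_le.1 abs_moebius_le_one).2

theorem Int.cast_eval_cyclotomic (q : ℤ) (n : ℕ) :
    (((cyclotomic n ℤ).eval q : ℤ) : ℝ) = (cyclotomic n ℝ).eval (q : ℝ) := by
  simpa using (cyclotomic.eval_apply q n (Int.castRingHom ℝ)).symm

theorem three_le_eval_two_cyclotomic {n : ℕ} (hn : 2 ≤ n) : 3 ≤ (cyclotomic n ℤ).eval 2 := by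
  have hodd : Odd ((cyclotomic n ℤ).eval 2) := by
    have hdvd := eval_dvd (x := (2 : ℤ)) (cyclotomic.dvd_X_pow_sub_one n ℤ)
    simp only [eval_sub, eval_pow, eval_X, eval_one] at hdvd
    have : Odd ((2 : ℤ) ^ n - 1) := Even.sub_odd (even_two.pow_of_ne_zero (by omega)) odd_one
    refine Int.not_even_iff_odd.1 fun heven => ?_
    exact Int.not_even_iff_odd.2 this (even_iff_two_dvd.2 (heven.two_dvd.trans hdvd))
  have hgt : 1 < (cyclotomic n ℤ).eval 2 := by
    have := sub_one_pow_totient_lt_cyclotomic_eval hn (one_lt_two (α := ℝ))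
    rw [← Int.cast_ofNat, ← Int.cast_eval_cyclotomic] at this
    norm_num at this
    exact_mod_cast this
  obtain ⟨k, hk⟩ := hodd
  omega

theorem Real.rpow_div_lt_of_pow_lt {x b : ℝ} (hx : 0 ≤ x) (hb : 0 ≤ b) {k m : ℕ} (hm : m ≠ 0)
    (h : x ^ k < b ^ m) : x ^ ((k : ℝ) / m) < b := by
  refine lt_of_pow_lt_pow_left₀ m hb ?_
  rwa [← Real.rpow_natCast (x ^ _), ← Real.rpow_mul hx, div_mul_cancel₀ _ (by exact_mod_cast hm),
    Real.rpow_natCast]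

theorem five_pow_lt_mul_two_pow_pow_four {k : ℕ} (hk : 3 ≤ k) :
    (5 : ℝ) ^ k < (15 / 32 * 2 ^ k) ^ 4 := by
  have h : (16 / 5 : ℝ) ^ 3 ≤ (16 / 5) ^ k := pow_le_pow_right₀ (by norm_num) hk
  have h5 : (0 : ℝ) < 5 ^ k := by positivity
  calc (5 : ℝ) ^ k < (15 / 32) ^ 4 * (16 / 5) ^ 3 * 5 ^ k := by nlinarith
    _ ≤ (15 / 32) ^ 4 * (16 / 5) ^ k * 5 ^ k := by gcongr
    _ = (15 / 32 * 2 ^ k) ^ 4 := by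
      rw [mul_assoc, ← mul_pow, mul_pow (15 / 32 : ℝ), ← pow_mul, mul_comm k, pow_mul]; norm_num

/-- For `n ≥ 2`, `|Φ_n(2)| > 5^{φ(n)/4}`. -/
theorem stmt_10 (n : ℕ) (hn : 2 ≤ n) :
    (5 : ℝ) ^ ((n.totient : ℝ) / 4) < |(((Polynomial.cyclotomic n ℤ).eval 2 : ℤ) : ℝ)| := by
  have h3 : (3 : ℝ) ≤ (cyclotomic n ℤ).eval 2 := mod_cast three_le_eval_two_cyclotomic hn
  have hlow : 15 / 32 * 2 ^ n.totient ≤ (((cyclotomic n ℤ).eval 2 : ℤ) : ℝ) := by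
    rw [Int.cast_eval_cyclotomic, Int.cast_ofNat]
    exact mul_two_pow_totient_le_eval_two_cyclotomic (by omega)
  rw [abs_of_pos (by linarith)]
  refine Real.rpow_div_lt_of_pow_lt (by norm_num) (by linarith) four_ne_zero ?_
  rcases le_or_gt n.totient 2 with hφ | hφ
  · calc (5 : ℝ) ^ n.totient ≤ 5 ^ 2 := pow_le_pow_right₀ (by norm_num) hφ
      _ < 3 ^ 4 := by norm_num
      _ ≤ _ := pow_le_pow_left₀ (by norm_num) h3 4
  · calc (5 : ℝ) ^ n.totient < (15 / 32 * 2 ^ n.totient) ^ 4 := five_pow_lt_mul_two_pow_pow_four hφ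
      _ ≤ _ := pow_le_pow_left₀ (by positivity) hlow 4
end

section
/- Let v be a discrete valuation, and suppose P is a point with v(t(P)) ≥ 1 and for all positive integers m, v(t(mP)) = v(t(P)) + v(m) (formal group law property). Let d₁ > d₂ ≥ 1 be integers, and suppose points P₁ = n₁P and P₂ = n₂P (with n₁, n₂ positive integers) satisfy d₁·(v(t(P)) + v(n₁)) = d₂·(v(t(P)) + v(n₂)). Then v(n₂) ≥ (d₁ - d₂)/d₂, and hence n₂ ≥ ℓ^{⌈d₁/d₂⌉ - 1} where ℓ is the prime with v(ℓ) = 1. -/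
/-!
Write `v` for `padicValNat ℓ`. Since `f 1 ≥ 1` and `v n₁ ≥ 0`, the relation
`d₁ (f 1 + v n₁) = d₂ (f 1 + v n₂)` gives `d₁ f 1 ≤ d₂ (f 1 + v n₂) ≤ d₂ (v n₂ + 1) f 1`,
so `d₁ ≤ d₂ (v n₂ + 1)`. Both bounds are this inequality divided by `d₂`, and `ℓ ^ v n₂`
divides `n₂`.
-/

theorem le_mul_add_one_of_mul_add_eq {a b f u w : ℤ} (hf : 1 ≤ f) (ha : 0 ≤ a) (hb : 0 ≤ b)
    (hu : 0 ≤ u) (hw : 0 ≤ w) (h : a * (f + u) = b * (f + w)) : a ≤ b * (w + 1) := by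
  refine le_of_mul_le_mul_right ?_ (show 0 < f by omega)
  calc a * f ≤ a * (f + u) := mul_le_mul_of_nonneg_left (le_add_of_nonneg_right hu) ha
    _ = b * (f + w) := h
    _ ≤ b * (w + 1) * f := by nlinarith [mul_le_mul_of_nonneg_left hf (mul_nonneg hb hw)]

theorem pow_le_of_le_padicValNat {p n k : ℕ} (hn : 0 < n) (hk : k ≤ padicValNat p n) :
    p ^ k ≤ n :=
  Nat.le_of_dvd hn ((pow_dvd_pow p hk).trans pow_padicValNat_dvd)

theorem stmt_17_general (ℓ : ℕ) (f : ℕ → ℤ) (h1 : 1 ≤ f 1)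
    (hf : ∀ m : ℕ, 0 < m → f m = f 1 + padicValNat ℓ m)
    (d₁ d₂ n₁ n₂ : ℕ) (hn₁ : 0 < n₁) (hn₂ : 0 < n₂)
    (heq : (d₁ : ℤ) * f n₁ = (d₂ : ℤ) * f n₂) :
    ((d₁ : ℚ) - (d₂ : ℚ)) / (d₂ : ℚ) ≤ (padicValNat ℓ n₂ : ℚ) ∧
      ℓ ^ (⌈(d₁ : ℚ) / (d₂ : ℚ)⌉₊ - 1) ≤ n₂ := by
  rw [hf n₁ hn₁, hf n₂ hn₂] at heq
  have hd : (d₁ : ℤ) ≤ d₂ * (padicValNat ℓ n₂ + 1) :=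
    le_mul_add_one_of_mul_add_eq h1 (by positivity) (by positivity) (by positivity)
      (by positivity) heq
  have hdq : (d₁ : ℚ) ≤ (padicValNat ℓ n₂ + 1) * d₂ := by
    rw [mul_comm]; exact_mod_cast hd
  refine ⟨div_le_of_le_mul₀ (by positivity) (by positivity) (by linarith),
    pow_le_of_le_padicValNat hn₂ ?_⟩
  have hceil : ⌈(d₁ : ℚ) / d₂⌉₊ ≤ padicValNat ℓ n₂ + 1 :=
    Nat.ceil_le.2 (by exact_mod_cast div_le_of_le_mul₀ (by positivity) (by positivity) hdq)
  omega

/-- Valuation-theoretic core of the lower bound for non-integral points. Here `ℓ` is a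
prime, `f m` plays the role of `v(t(mP))` for the `ℓ`-adic valuation `v` (normalised so
that `v(ℓ) = 1`), so that `f m = f 1 + v(m)` with `f 1 = v(t(P)) ≥ 1`. If `d₁ > d₂ ≥ 1`
and `d₁ f(n₁) = d₂ f(n₂)`, then `v(n₂) ≥ (d₁-d₂)/d₂` and hence `n₂ ≥ ℓ^{⌈d₁/d₂⌉-1}`. -/
theorem stmt_17 (ℓ : ℕ) (hℓ : ℓ.Prime) (f : ℕ → ℤ) (h1 : 1 ≤ f 1)
    (hf : ∀ m : ℕ, 0 < m → f m = f 1 + padicValNat ℓ m)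
    (d₁ d₂ n₁ n₂ : ℕ) (hd₂ : 1 ≤ d₂) (hd : d₂ < d₁) (hn₁ : 0 < n₁) (hn₂ : 0 < n₂)
    (heq : (d₁ : ℤ) * f n₁ = (d₂ : ℤ) * f n₂) :
    ((d₁ : ℚ) - (d₂ : ℚ)) / (d₂ : ℚ) ≤ (padicValNat ℓ n₂ : ℚ) ∧
      ℓ ^ (⌈(d₁ : ℚ) / (d₂ : ℚ)⌉₊ - 1) ≤ n₂ :=
  stmt_17_general ℓ f h1 hf d₁ d₂ n₁ n₂ hn₁ hn₂ heq
end

section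
/- Let k be a field of characteristic 0, and A, B ∈ k with 4A³ + 27B² ≠ 0. Suppose there is no nonconstant morphism ℙ¹ → E over k̄, where E is the elliptic curve y² = x³ + Ax + B (equivalently, E has genus 1). Let p(X) ∈ k[X] be a nonconstant polynomial. Then the polynomial Z³ + A·Z + B - p(X)² is irreducible in k(X)[Z]. -/
open Polynomial

/-! A root `z` of the cubic in `k(X)` would give the point `(z, p)` on `E` with coordinates in
`k(X) ⊆ k̄(X)`, i.e. a rational map `ℙ¹ → E`; by hypothesis it is constant, so `p` is
constant. A cubic without roots is irreducible. -/

namespace RatFunc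

variable {K L : Type*} [Field K] [Field L]

noncomputable def mapCoeffs (f : K →+* L) : RatFunc K →+* RatFunc L :=
  mapRingHom (Polynomial.mapRingHom f)
    (nonZeroDivisors_le_comap_nonZeroDivisors_of_injective _ (Polynomial.map_injective f f.injective))

theorem mapCoeffs_algebraMap (f : K →+* L) (p : K[X]) :
    mapCoeffs f (algebraMap K[X] (RatFunc K) p) = algebraMap L[X] (RatFunc L) (p.map f) := by
  simpa [mapCoeffs, coe_mapRingHom_eq_coe_map] using map_apply_div (Polynomial.mapRingHom f)
    (nonZeroDivisors_le_comap_nonZeroDivisors_of_injective _ (Polynomial.map_injective f f.injective)) p 1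

theorem mapCoeffs_C (f : K →+* L) (a : K) : mapCoeffs f (C a) = C (f a) := by
  rw [← algebraMap_C, mapCoeffs_algebraMap, Polynomial.map_C, algebraMap_C]

end RatFunc

theorem irreducible_X_pow_three_add_C_mul_X_add_C {F : Type*} [Field F] (a b : F)
    (h : ∀ z, z ^ 3 + a * z + b ≠ 0) : Irreducible (X ^ 3 + C a * X + C b : F[X]) := by
  have hdeg : (X ^ 3 + C a * X + C b : F[X]).natDegree = 3 := by compute_degree!
  rw [irreducible_iff_roots_eq_zero_of_degree_le_three (by omega) (by omega),
    Multiset.eq_zero_iff_forall_notMem]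
  intro z hz
  have hne : (X ^ 3 + C a * X + C b : F[X]) ≠ 0 := ne_zero_of_natDegree_gt (n := 0) (by omega)
  exact h z (by simpa using (mem_roots hne).mp hz)

theorem natDegree_eq_zero_of_sq_eq_cubic {K L : Type*} [Field K] [Field L] [Algebra K L]
    {A B : K}
    (hE : ∀ f g : RatFunc L,
      g ^ 2 = f ^ 3 + RatFunc.C (algebraMap K L A) * f + RatFunc.C (algebraMap K L B) →
        (∃ c, f = RatFunc.C c) ∧ ∃ c, g = RatFunc.C c)
    {p : K[X]} {z : RatFunc K}
    (hpz : algebraMap K[X] (RatFunc K) p ^ 2 = z ^ 3 + RatFunc.C A * z + RatFunc.C B) :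
    p.natDegree = 0 := by
  let φ := RatFunc.mapCoeffs (algebraMap K L)
  have hpz' := congrArg φ hpz
  simp only [map_add, map_mul, map_pow, φ, RatFunc.mapCoeffs_C,
    RatFunc.mapCoeffs_algebraMap] at hpz'
  obtain ⟨-, c, hc⟩ := hE _ _ hpz'
  rw [← RatFunc.algebraMap_C] at hc
  rw [← natDegree_map (algebraMap K L), RatFunc.algebraMap_injective L hc, natDegree_C]

theorem stmt_18_general {k : Type*} [Field k] (A B : k)
    (hE : ∀ f g : RatFunc (AlgebraicClosure k),
      g ^ 2 = f ^ 3 + RatFunc.C (algebraMap k (AlgebraicClosure k) A) * f +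
          RatFunc.C (algebraMap k (AlgebraicClosure k) B) →
        (∃ c, f = RatFunc.C c) ∧ ∃ c, g = RatFunc.C c)
    (p : Polynomial k) (hp : 0 < p.natDegree) :
    Irreducible ((Polynomial.X : Polynomial (RatFunc k)) ^ 3 +
      Polynomial.C (RatFunc.C A) * Polynomial.X +
      Polynomial.C (RatFunc.C B - (algebraMap (Polynomial k) (RatFunc k) p) ^ 2)) := by
  refine irreducible_X_pow_three_add_C_mul_X_add_C _ _ fun z hz => hp.ne' ?_
  exact natDegree_eq_zero_of_sq_eq_cubic hE (z := z) (by linear_combination -hz)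

/-- Let `k` be a field of characteristic `0`, `A, B ∈ k` with `4A³ + 27B² ≠ 0`, and
suppose there is no nonconstant morphism `ℙ¹ → E` over the algebraic closure of `k`
(expressed as: every rational-function solution `(f, g)` of `g² = f³ + Af + B` over the
algebraic closure is constant). Then for every nonconstant `p(X) ∈ k[X]`, the polynomial
`Z³ + AZ + B - p(X)²` is irreducible in `k(X)[Z]`. -/
theorem stmt_18 {k : Type*} [Field k] [CharZero k] (A B : k)
    (hdisc : 4 * A ^ 3 + 27 * B ^ 2 ≠ 0)
    (hE : ∀ f g : RatFunc (AlgebraicClosure k),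
      g ^ 2 = f ^ 3 + RatFunc.C (algebraMap k (AlgebraicClosure k) A) * f +
          RatFunc.C (algebraMap k (AlgebraicClosure k) B) →
        (∃ c, f = RatFunc.C c) ∧ ∃ c, g = RatFunc.C c)
    (p : Polynomial k) (hp : 0 < p.natDegree) :
    Irreducible ((Polynomial.X : Polynomial (RatFunc k)) ^ 3 +
      Polynomial.C (RatFunc.C A) * Polynomial.X +
      Polynomial.C (RatFunc.C B - (algebraMap (Polynomial k) (RatFunc k) p) ^ 2)) :=
  stmt_18_general A B hE p hp
end

section
/- Assume A and B are rational integers such that -3A and -3·Δ are not squares in ℚ, where Δ = -16(4A³ + 27B²) ≠ 0. Then the quartic polynomial g(T) = 27T⁴ - 54BT² + 4A³ + 27B² is irreducible over ℚ; in particular its four roots are distinct and each has degree 4 over ℚ. -/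
/-!
Dividing by the leading coefficient, `g = 27 (X⁴ + pX² + c)`. A rational root `r` of the
biquadratic would make its discriminant `p² - 4c = (2r² + p)²` a square, and a factorization
into monic quadratics `(X² + uX + v)(X² - uX + v')` forces `u (v - v') = 0`, hence either
`p² - 4c = (v - v')²` or `c = v²`. Up to nonzero rational square factors, the discriminant
of `27T⁴ - 54BT² + (4A³ + 27B²)` is `-3A` and `27 (4A³ + 27B²)` is `-3Δ`.
-/
open Polynomial

namespace Polynomial

variable {R : Type*} [CommRing R]

theorem Monic.eq_X_sq_add_C_mul_X_add_C {f : R[X]} (hm : f.Monic) (hnd : f.natDegree = 2) :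
    f = X ^ 2 + C (f.coeff 1) * X + C (f.coeff 0) := by
  conv_lhs => rw [hm.as_sum, hnd]
  simp only [Finset.sum_range_succ, Finset.sum_range_zero, pow_zero, pow_one, mul_one]
  ring

theorem isSquare_discrim_of_isRoot_X_pow_four_add {p c r : R}
    (hr : (X ^ 4 + C p * X ^ 2 + C c).IsRoot r) : IsSquare (discrim 1 p c) := by
  have hr' : r ^ 4 + p * r ^ 2 + c = 0 := by simpa [IsRoot] using hr
  exact ⟨2 * r ^ 2 + p, by
    rw [discrim_eq_sq_of_quadratic_eq_zero (x := r ^ 2) (by linear_combination hr'), ← sq]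
    ring⟩

theorem isSquare_discrim_or_isSquare_of_quadratic_mul_quadratic_eq [NoZeroDivisors R]
    {a b a' b' p c : R}
    (h : (X ^ 2 + C a * X + C b) * (X ^ 2 + C a' * X + C b') = X ^ 4 + C p * X ^ 2 + C c) :
    IsSquare (discrim 1 p c) ∨ IsSquare c := by
  have hprod : (X ^ 2 + C a * X + C b) * (X ^ 2 + C a' * X + C b') =
      X ^ 4 + C (a + a') * X ^ 3 + C (b + a * a' + b') * X ^ 2 + C (a * b' + a' * b) * X
        + C (b * b') := by
    simp only [map_add, map_mul]; ring
  rw [hprod] at h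
  have e3 := congrArg (coeff · 3) h
  have e2 := congrArg (coeff · 2) h
  have e1 := congrArg (coeff · 1) h
  have e0 := congrArg (coeff · 0) h
  simp only [coeff_add, coeff_C_mul_X_pow, coeff_C_mul_X, coeff_X_pow, coeff_C] at e3 e2 e1 e0
  norm_num at e3 e2 e1 e0
  have key : a * (b' - b) = 0 := by linear_combination e1 - b * e3
  rcases mul_eq_zero.mp key with ha | hb
  · left
    have a'0 : a' = 0 := by linear_combination e3 - ha
    refine ⟨b - b', ?_⟩
    rw [discrim, ← e2, ← e0, ha, a'0]
    ring
  · right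
    exact ⟨b, by rw [← e0, sub_eq_zero.mp hb]⟩

theorem irreducible_X_pow_four_add_C_mul_X_sq_add_C [IsDomain R] {p c : R}
    (hd : ¬IsSquare (discrim 1 p c)) (hc : ¬IsSquare c) :
    Irreducible (X ^ 4 + C p * X ^ 2 + C c) := by
  have hm : (X ^ 4 + C p * X ^ 2 + C c : R[X]).Monic := by monicity!
  have hdeg : (X ^ 4 + C p * X ^ 2 + C c : R[X]).natDegree = 4 := by compute_degree!
  refine hm.irreducible_iff_natDegree'.mpr ⟨fun h1 => by simp [h1] at hdeg, ?_⟩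
  intro f g hf hg hfg hg_deg
  rw [hdeg, Finset.mem_Ioc] at hg_deg
  obtain hg1 | hg2 : g.natDegree = 1 ∨ g.natDegree = 2 := by omega
  · apply hd
    refine isSquare_discrim_of_isRoot_X_pow_four_add (r := -g.coeff 0) ?_
    rw [← hfg, IsRoot, eval_mul, hg.eq_X_add_C hg1]
    simp
  · have hf2 : f.natDegree = 2 := by
      have := hf.natDegree_mul hg
      rw [hfg, hdeg] at this
      omega
    rw [hf.eq_X_sq_add_C_mul_X_add_C hf2, hg.eq_X_sq_add_C_mul_X_add_C hg2] at hfg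
    exact (isSquare_discrim_or_isSquare_of_quadratic_mul_quadratic_eq hfg).elim hd hc

theorem irreducible_C_mul_X_pow_four_add_C_mul_X_sq_add_C {K : Type*} [Field K] {a b c : K}
    (ha : a ≠ 0) (hd : ¬IsSquare (discrim a b c)) (hc : ¬IsSquare (a * c)) :
    Irreducible (C a * X ^ 4 + C b * X ^ 2 + C c) := by
  have hmonic :
      C a * X ^ 4 + C b * X ^ 2 + C c = C a * (X ^ 4 + C (b / a) * X ^ 2 + C (c / a)) := by
    simp only [mul_add, ← mul_assoc, ← C_mul, mul_div_cancel₀ _ ha]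
  have hd' : discrim a b c = discrim 1 (b / a) (c / a) * a ^ 2 := by
    unfold discrim; field_simp
  have hc' : a * c = c / a * a ^ 2 := by field_simp
  rw [hmonic, irreducible_isUnit_mul (isUnit_C.mpr ha.isUnit)]
  refine irreducible_X_pow_four_add_C_mul_X_sq_add_C (fun h => hd ?_) (fun h => hc ?_)
  · rw [hd']; exact h.mul (.sq a)
  · rw [hc']; exact h.mul (.sq a)

end Polynomial

theorem stmt_19_general (A B : ℤ)
    (hA : ¬ IsSquare ((-3 * A : ℤ) : ℚ))
    (hD : ¬ IsSquare (((-3 * (-16 * (4 * A ^ 3 + 27 * B ^ 2)) : ℤ)) : ℚ)) :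
    Irreducible ((27 : Polynomial ℚ) * Polynomial.X ^ 4 -
      54 * Polynomial.C (B : ℚ) * Polynomial.X ^ 2 +
      Polynomial.C ((4 * A ^ 3 + 27 * B ^ 2 : ℤ) : ℚ)) := by
  set q : ℚ := ((4 * A ^ 3 + 27 * B ^ 2 : ℤ) : ℚ) with hq
  have hg : (27 : ℚ[X]) * X ^ 4 - 54 * C (B : ℚ) * X ^ 2 + C q =
      C 27 * X ^ 4 + C (-54 * B : ℚ) * X ^ 2 + C q := by
    simp only [map_mul, map_neg, map_ofNat]; ring
  rw [hg]
  refine irreducible_C_mul_X_pow_four_add_C_mul_X_sq_add_C (by norm_num)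
    (fun h => hA ?_) (fun h => hD ?_)
  · rcases eq_or_ne (A : ℚ) 0 with hA0 | hA0
    · simp [hA0]
    · have : ((-3 * A : ℤ) : ℚ) =
          discrim 27 (-54 * B : ℚ) q * ((12 * A : ℚ)⁻¹) ^ 2 := by
        rw [discrim, hq]; push_cast; field_simp; ring
      rw [this]; exact h.mul (.sq _)
  · have : ((-3 * (-16 * (4 * A ^ 3 + 27 * B ^ 2)) : ℤ) : ℚ) = 27 * q * (4 / 3) ^ 2 := by
      rw [hq]; push_cast; ring
    rw [this]; exact h.mul (.sq _)

/-- Kappe–Warren irreducibility criterion applied in the genus computation: if `A, B` are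
rational integers with `Δ = -16(4A³+27B²) ≠ 0` such that neither `-3A` nor `-3Δ` is a
square in `ℚ`, then `g(T) = 27T⁴ - 54BT² + 4A³ + 27B²` is irreducible over `ℚ`. -/
theorem stmt_19 (A B : ℤ) (hΔ : (-16 : ℤ) * (4 * A ^ 3 + 27 * B ^ 2) ≠ 0)
    (hA : ¬ IsSquare ((-3 * A : ℤ) : ℚ))
    (hD : ¬ IsSquare (((-3 * (-16 * (4 * A ^ 3 + 27 * B ^ 2)) : ℤ)) : ℚ)) :
    Irreducible ((27 : Polynomial ℚ) * Polynomial.X ^ 4 -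
      54 * Polynomial.C (B : ℚ) * Polynomial.X ^ 2 +
      Polynomial.C ((4 * A ^ 3 + 27 * B ^ 2 : ℤ) : ℚ)) :=
  stmt_19_general A B hA hD
end
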